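/- arXiv:math/0205001 — 2 statements merged into one kernel-verified Lean document; each statement's English description precedes it below -/
import Mathlib

section
/- Let μ be a positive measure on ℝ^n absolutely continuous with respect to Lebesgue measure, Q a cube with 0 < μ(Q) < ∞, and f a nonnegative μ-integrable function on Q. Suppose that for some 0 < α, β < 1 one has μ{x ∈ Q : f(x) > β·f_{Q,μ}} > α·μ(Q). Then Ω_μ(f; Q) ≤ 2(1 − αβ)·f_{Q,μ}. -/
open MeasureTheory

/-- A closed axis-parallel cube of positive side length in `ℝⁿ`. -/
def IsCube {n : ℕ} (Q : Set (Fin n → ℝ)) : Prop :=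
  ∃ (a : Fin n → ℝ) (h : ℝ), 0 < h ∧ Q = Set.Icc a (fun i => a i + h)

/-- The `μ`-average `f_{Q,μ} = (1/μ(Q)) ∫_Q f dμ`. -/
noncomputable def muAvg {n : ℕ} (μ : Measure (Fin n → ℝ)) (Q : Set (Fin n → ℝ))
    (f : (Fin n → ℝ) → ℝ) : ℝ :=
  (∫ x in Q, f x ∂μ) / (μ Q).toReal

/-- The mean oscillation `Ω_μ(f;Q) = (1/μ(Q)) ∫_Q |f − f_{Q,μ}| dμ`. -/
noncomputable def muOsc {n : ℕ} (μ : Measure (Fin n → ℝ)) (Q : Set (Fin n → ℝ))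
    (f : (Fin n → ℝ) → ℝ) : ℝ :=
  (∫ x in Q, |f x - muAvg μ Q f| ∂μ) / (μ Q).toReal

/-!
Write `c` for the average of `f` and `M` for the mass of the cube. Since
`|f - c| = f + c - 2 min(f, c)` and `∫ f = c M`, the oscillation integral equals
`2 (c M - ∫ min(f, c))`. For nonnegative `f`, the truncation `min(f, c)` is at least `β c` on
`{f ≥ β c}` (as `β ≤ 1`), a set of measure at least `α M`; hence `∫ min(f, c) ≥ α β c M`.
-/

open Set

theorem IsCube.measurableSet {n : ℕ} {Q : Set (Fin n → ℝ)} (hQ : IsCube Q) : MeasurableSet Q := by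
  obtain ⟨a, h, -, rfl⟩ := hQ
  exact measurableSet_Icc

theorem muAvg_eq_setAverage {n : ℕ} (μ : Measure (Fin n → ℝ)) (Q : Set (Fin n → ℝ))
    (f : (Fin n → ℝ) → ℝ) : muAvg μ Q f = ⨍ x in Q, f x ∂μ := by
  rw [muAvg, setAverage_eq, smul_eq_mul, measureReal_def, div_eq_inv_mul]

theorem muOsc_eq_setAverage {n : ℕ} (μ : Measure (Fin n → ℝ)) (Q : Set (Fin n → ℝ))
    (f : (Fin n → ℝ) → ℝ) : muOsc μ Q f = ⨍ x in Q, |f x - muAvg μ Q f| ∂μ := by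
  rw [muOsc, setAverage_eq, smul_eq_mul, measureReal_def, div_eq_inv_mul]

namespace MeasureTheory

variable {X : Type*} [MeasurableSpace X] {ν : Measure X} [IsFiniteMeasure ν] {f : X → ℝ}

theorem integral_abs_sub_const (hf : Integrable f ν) (c : ℝ) :
    ∫ x, |f x - c| ∂ν = ∫ x, f x ∂ν + ν.real univ * c - 2 * ∫ x, min (f x) c ∂ν := by
  have hpt : ∀ x, |f x - c| = f x + c - 2 * min (f x) c := fun x => by
    linarith [max_sub_min_eq_abs' (f x) c, min_add_max (f x) c]
  have hfc : Integrable (fun x => f x + c) ν := hf.add (integrable_const c)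
  have hmin : Integrable (fun x => min (f x) c) ν := hf.inf (integrable_const c)
  simp_rw [hpt]
  rw [integral_sub hfc (hmin.const_mul 2), integral_add hf (integrable_const c), integral_const,
    integral_const_mul, smul_eq_mul]

theorem mul_measureReal_le_integral_min (hf0 : 0 ≤ᵐ[ν] f) (hf : Integrable f ν) {t c : ℝ}
    (ht0 : 0 ≤ t) (htc : t ≤ c) : t * ν.real {x | t ≤ f x} ≤ ∫ x, min (f x) c ∂ν := by
  have hset : {x | t ≤ min (f x) c} = {x | t ≤ f x} := by
    ext x
    simp [htc]
  have hmin0 : 0 ≤ᵐ[ν] fun x => min (f x) c := by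
    filter_upwards [hf0] with x hx
    exact le_min hx (ht0.trans htc)
  rw [← hset]
  exact mul_meas_ge_le_integral_of_nonneg hmin0 (hf.inf (integrable_const c)) t

theorem average_abs_sub_average_le [NeZero ν] (hf0 : 0 ≤ᵐ[ν] f) (hf : Integrable f ν) {α β : ℝ}
    (hβ0 : 0 ≤ β) (hβ1 : β ≤ 1)
    (hα : ENNReal.ofReal α * ν univ ≤ ν {x | β * ⨍ y, f y ∂ν ≤ f x}) :
    ⨍ x, |f x - ⨍ y, f y ∂ν| ∂ν ≤ 2 * (1 - α * β) * ⨍ x, f x ∂ν := by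
  set c := ⨍ y, f y ∂ν
  set M := ν.real univ
  have hM : 0 < M := measureReal_univ_pos
  have hfM : ∫ x, f x ∂ν = M * c := (measure_smul_average ν f).symm
  have hc0 : 0 ≤ c := by
    have := integral_nonneg_of_ae hf0
    rw [hfM] at this
    exact nonneg_of_mul_nonneg_right this hM
  have hαM : α * M ≤ ν.real {x | β * c ≤ f x} := by
    have h := ENNReal.toReal_mono (measure_ne_top ν _) hα
    rw [ENNReal.toReal_mul, ENNReal.toReal_ofReal'] at h
    exact (mul_le_mul_of_nonneg_right (le_max_left α 0) hM.le).trans h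
  have hmin : β * c * (α * M) ≤ ∫ x, min (f x) c ∂ν :=
    (mul_le_mul_of_nonneg_left hαM (by positivity)).trans
      (mul_measureReal_le_integral_min hf0 hf (by positivity) (mul_le_of_le_one_left hc0 hβ1))
  rw [average_eq, integral_abs_sub_const hf, hfM, smul_eq_mul, inv_mul_le_iff₀ hM]
  linarith

end MeasureTheory

theorem stmt1_general {n : ℕ} (μ : Measure (Fin n → ℝ))
    (Q : Set (Fin n → ℝ)) (hQ : IsCube Q) (hQpos : 0 < μ Q) (hQfin : μ Q < ⊤)
    (f : (Fin n → ℝ) → ℝ) (hf0 : ∀ x ∈ Q, 0 ≤ f x) (hfint : IntegrableOn f Q μ)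
    (α β : ℝ) (hβ0 : 0 < β) (hβ1 : β < 1)
    (hA : ENNReal.ofReal α * μ Q < μ {x ∈ Q | f x > β * muAvg μ Q f}) :
    muOsc μ Q f ≤ 2 * (1 - α * β) * muAvg μ Q f := by
  have hQm : MeasurableSet Q := hQ.measurableSet
  have : IsFiniteMeasure (μ.restrict Q) := isFiniteMeasure_restrict.2 hQfin.ne
  have : NeZero (μ.restrict Q) := ⟨by simpa [Measure.restrict_eq_zero] using hQpos.ne'⟩
  rw [muOsc_eq_setAverage]
  rw [muAvg_eq_setAverage] at hA ⊢
  refine average_abs_sub_average_le (ae_restrict_of_forall_mem hQm hf0) hfint hβ0.le hβ1.le ?_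
  calc ENNReal.ofReal α * μ.restrict Q univ = ENNReal.ofReal α * μ Q := by
        rw [Measure.restrict_apply_univ]
    _ ≤ μ {x ∈ Q | f x > β * ⨍ x in Q, f x ∂μ} := hA.le
    _ ≤ μ.restrict Q {x | β * ⨍ x in Q, f x ∂μ ≤ f x} := by
        rw [Measure.restrict_apply' hQm]
        exact measure_mono fun x ⟨hxQ, hx⟩ => ⟨hx.le, hxQ⟩

/-- Theorem 1(ii) of Korenovskyy–Lerner–Stokolos: if
`μ{x ∈ Q : f(x) > β f_{Q,μ}} > α μ(Q)` for some `0 < α, β < 1`, then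
`Ω_μ(f;Q) ≤ 2(1 − αβ) f_{Q,μ}`. -/
theorem stmt1 {n : ℕ} (μ : Measure (Fin n → ℝ)) (hac : μ ≪ volume)
    (Q : Set (Fin n → ℝ)) (hQ : IsCube Q) (hQpos : 0 < μ Q) (hQfin : μ Q < ⊤)
    (f : (Fin n → ℝ) → ℝ) (hf0 : ∀ x ∈ Q, 0 ≤ f x) (hfint : IntegrableOn f Q μ)
    (α β : ℝ) (hα0 : 0 < α) (hα1 : α < 1) (hβ0 : 0 < β) (hβ1 : β < 1)
    (hA : ENNReal.ofReal α * μ Q < μ {x ∈ Q | f x > β * muAvg μ Q f}) :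
    muOsc μ Q f ≤ 2 * (1 - α * β) * muAvg μ Q f :=
  stmt1_general μ Q hQ hQpos hQfin f hf0 hfint α β hβ0 hβ1 hA
end

section
/- For every dimension n ≥ 1 there exists a constant B(n) > 0 with the following property (covering lemma). Let μ be a positive measure on ℝ^n absolutely continuous with respect to Lebesgue measure, Q_0 a cube with 0 < μ(Q_0) < ∞, E a measurable subset of Q_0, and 0 < ρ < 1 with μ(E) ≤ ρ·μ(Q_0). Then there exists a (finite or countable) family {Q_i} of cubes contained in Q_0 such that: (i) μ(Q_i ∩ E) = ρ·μ(Q_i) for every i; (ii) the family is almost disjoint with constant B(n), i.e. every point of Q_0 belongs to at most B(n) of the cubes Q_i; (iii) μ-almost every point of E belongs to ∪_i Q_i. -/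
open MeasureTheory

/-!
Replace `μ` by the finite measure `ν = μ|Q₀`, absolutely continuous with respect to Lebesgue
measure. For `x ∈ Q₀` and `0 ≤ s ≤ side Q₀` let `C(x, s)` be the cube of side `s` inside `Q₀`
containing `x` and as nearly centred at `x` as `Q₀` allows. Faces of cubes are Lebesgue-null, so
`ν(C(x, s))` and `ν(C(x, s) ∩ E)` depend continuously on `s`. At an interior density point `x`
of `E` the cube `C(x, s)` is the sup-norm ball of radius `s / 2` for small `s`, where the
proportion of `E` exceeds `ρ`, while `C(x, side Q₀) = Q₀` has proportion at most `ρ`; the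
intermediate value theorem yields a side `s(x)` with proportion exactly `ρ`. Almost every point
of `E` is an interior density point, and the Besicovitch covering theorem sorts the balls of
radius `s(x) / 2` into `N` disjoint families covering all these points. A point `y` lies in at
most `3ⁿ` cubes of one family: in each coordinate, `y` sits left of, inside or right of the
centred window of a cube containing it, and two cubes of a family with the same pattern would
have intersecting balls, since lying outside the window forces a cube against a face of `Q₀`.
-/

open Set Metric Filter
open scoped ENNReal Topology

universe u

section Interval

variable {a h x y s r : ℝ}

/-- Left end of the interval of length `s` inside `[a, a + h]` that is as nearly centred at `x`
as that constraint allows. -/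
noncomputable def clampLeft (a h x s : ℝ) : ℝ := max a (min (x - s / 2) (a + h - s))

lemma continuous_clampLeft (a h x : ℝ) : Continuous (clampLeft a h x) := by
  unfold clampLeft; fun_prop

lemma clampLeft_le_sub (hs : s ≤ h) : clampLeft a h x s ≤ a + h - s :=
  max_le (by linarith) (min_le_right _ _)

lemma clampLeft_self (a h x : ℝ) : clampLeft a h x h = a :=
  max_eq_left (min_le_of_right_le (by linarith))

lemma clampLeft_two_mul (h₁ : a ≤ x - r) (h₂ : x + r ≤ a + h) :
    clampLeft a h x (2 * r) = x - r := by
  rw [clampLeft, show 2 * r / 2 = r by ring, min_eq_left (by linarith), max_eq_right h₁]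

lemma mem_Icc_clampLeft (hy : y ∈ Icc a (a + h)) (hyx : |y - x| ≤ s / 2) :
    y ∈ Icc (clampLeft a h x s) (clampLeft a h x s + s) := by
  rw [abs_le] at hyx
  have : y - s ≤ clampLeft a h x s :=
    le_max_of_le_right (le_min (by linarith) (by linarith [hy.2]))
  exact ⟨max_le hy.1 (min_le_of_left_le (by linarith)), by linarith⟩

lemma clampLeft_eq_left (hy : y ≤ clampLeft a h x s + s) (hxy : x + s / 2 < y) :
    clampLeft a h x s = a := by
  refine (max_choice _ _).resolve_right fun hmin => ?_
  rw [clampLeft, hmin] at hy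
  linarith [min_le_left (x - s / 2) (a + h - s)]

lemma clampLeft_eq_right (hs : s ≤ h) (hy : clampLeft a h x s ≤ y) (hxy : y < x - s / 2) :
    clampLeft a h x s = a + h - s := by
  have hmin : min (x - s / 2) (a + h - s) = a + h - s :=
    (min_choice _ _).resolve_left fun hmin =>
      absurd (hmin ▸ le_max_right a _ : x - s / 2 ≤ clampLeft a h x s) (by linarith)
  rw [clampLeft, hmin, max_eq_right (by linarith)]

noncomputable def offsetSign (t s : ℝ) : SignType :=
  if s / 2 < t then 1 else if t < -(s / 2) then -1 else 0

/-- A point lying to the right of the centred window of a clamped interval forces the interval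
against the left end `a`, and symmetrically; so equal offset signs put the two centres within
`s / 2 + s' / 2` of each other. -/
lemma abs_sub_le_of_offsetSign_eq {x' s' : ℝ} (hx : x ∈ Icc a (a + h)) (hx' : x' ∈ Icc a (a + h))
    (hs : s ≤ h) (hs' : s' ≤ h)
    (hy : y ∈ Icc (clampLeft a h x s) (clampLeft a h x s + s))
    (hy' : y ∈ Icc (clampLeft a h x' s') (clampLeft a h x' s' + s'))
    (heq : offsetSign (y - x) s = offsetSign (y - x') s') :
    |x - x'| ≤ s / 2 + s' / 2 := by
  have hs0 : 0 ≤ s := by linarith [hy.1.trans hy.2]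
  have hs0' : 0 ≤ s' := by linarith [hy'.1.trans hy'.2]
  obtain ⟨hxa, hxb⟩ := hx
  obtain ⟨hxa', hxb'⟩ := hx'
  rw [abs_sub_le_iff]
  unfold offsetSign at heq
  split_ifs at heq with h₁ h₂ h₃ h₄ h₃ h₄ h₃ h₄ <;> try exact absurd heq (by decide)
  · have := clampLeft_eq_left hy.2 (by linarith)
    have := clampLeft_eq_left hy'.2 (by linarith)
    constructor <;> linarith [hy.2, hy'.2]
  · have := clampLeft_eq_right hs hy.1 (by linarith)
    have := clampLeft_eq_right hs' hy'.1 (by linarith)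
    constructor <;> linarith [hy.1, hy'.1]
  · constructor <;> linarith

end Interval

section Cube

variable {ι : Type u} {a x y : ι → ℝ} {h s r : ℝ}

def clampedCube (a : ι → ℝ) (h : ℝ) (x : ι → ℝ) (s : ℝ) : Set (ι → ℝ) :=
  Icc (fun i => clampLeft (a i) h (x i) s) (fun i => clampLeft (a i) h (x i) s + s)

lemma mem_clampedCube :
    y ∈ clampedCube a h x s ↔
      ∀ i, y i ∈ Icc (clampLeft (a i) h (x i) s) (clampLeft (a i) h (x i) s + s) := by
  simp only [clampedCube, mem_Icc, Pi.le_def, forall_and]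

lemma isCube_clampedCube {n : ℕ} {a x : Fin n → ℝ} (hs : 0 < s) : IsCube (clampedCube a h x s) :=
  ⟨_, s, hs, rfl⟩

lemma clampedCube_subset (hs : s ≤ h) : clampedCube a h x s ⊆ Icc a fun i => a i + h := by
  intro y hy
  refine ⟨fun i => (le_max_left _ _).trans (hy.1 i), fun i => ?_⟩
  linarith [hy.2 i, clampLeft_le_sub (a := a i) (x := x i) hs]

lemma clampedCube_self : clampedCube a h x h = Icc a fun i => a i + h := by
  simp only [clampedCube, clampLeft_self]

lemma closedBall_inter_subset_clampedCube [Fintype ι] :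
    closedBall x (s / 2) ∩ Icc a (fun i => a i + h) ⊆ clampedCube a h x s := by
  rintro y ⟨hyx, hy⟩
  refine mem_clampedCube.2 fun i => mem_Icc_clampLeft ⟨hy.1 i, hy.2 i⟩ ?_
  rw [← Real.dist_eq]
  exact (dist_le_pi_dist y x i).trans hyx

lemma clampedCube_eq_closedBall [Fintype ι] (hr : 0 ≤ r)
    (hsub : closedBall x r ⊆ Icc a fun i => a i + h) :
    clampedCube a h x (2 * r) = closedBall x r := by
  have hball : closedBall x r = Icc (fun i => x i - r) (fun i => x i + r) := by
    simp only [closedBall_pi _ hr, Real.closedBall_eq_Icc, pi_univ_Icc]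
  rw [hball, Icc_subset_Icc_iff (fun i => by linarith)] at hsub
  rw [hball, clampedCube]
  congr <;> funext i
  · exact clampLeft_two_mul (hsub.1 i) (hsub.2 i)
  · rw [clampLeft_two_mul (hsub.1 i) (hsub.2 i)]; ring

end Cube

section Measure

variable {ι : Type u} [Fintype ι] {ν : Measure (ι → ℝ)}

lemma tendsto_measure_Icc_of_absolutelyContinuous [IsFiniteMeasure ν] (hν : ν ≪ volume)
    {α : Type*} {l : Filter α} [l.IsCountablyGenerated] {f g : α → ι → ℝ} {a b : ι → ℝ}
    (hf : Tendsto f l (𝓝 a)) (hg : Tendsto g l (𝓝 b)) :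
    Tendsto (fun t => ν (Icc (f t) (g t))) l (𝓝 (ν (Icc a b))) := by
  refine tendsto_measure_of_ae_tendsto_indicator_of_isFiniteMeasure l measurableSet_Icc
    (fun _ => measurableSet_Icc) ?_
  have hfrontier : ∀ᵐ z ∂ν, z ∉ frontier (Icc a b) :=
    measure_eq_zero_iff_ae_notMem.1 (hν (Convex.addHaar_frontier volume (convex_Icc a b)))
  filter_upwards [hfrontier] with z hz
  by_cases hzQ : z ∈ Icc a b
  · have hint : z ∈ interior (Icc a b) := by_contra fun h => hz ⟨subset_closure hzQ, h⟩
    rw [← pi_univ_Icc, interior_pi_set finite_univ] at hint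
    simp only [interior_Icc, Set.mem_univ_pi, mem_Ioo] at hint
    have hlt : ∀ᶠ t in l, ∀ i, f t i < z i ∧ z i < g t i := eventually_all.2 fun i =>
      ((tendsto_pi_nhds.1 hf i).eventually_lt_const (hint i).1).and
        ((tendsto_pi_nhds.1 hg i).eventually_const_lt (hint i).2)
    filter_upwards [hlt] with t ht
    exact iff_of_true ⟨fun i => (ht i).1.le, fun i => (ht i).2.le⟩ hzQ
  · have hclosed : IsClosed {p : (ι → ℝ) × (ι → ℝ) | z ∈ Icc p.1 p.2} :=
      (isClosed_le continuous_fst continuous_const).inter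
        (isClosed_le continuous_const continuous_snd)
    filter_upwards [(hf.prodMk_nhds hg).eventually (hclosed.isOpen_compl.mem_nhds hzQ)] with t ht
    exact iff_of_false ht hzQ

lemma continuous_measure_clampedCube [IsFiniteMeasure ν] (hν : ν ≪ volume) (a : ι → ℝ) (h : ℝ)
    (x : ι → ℝ) : Continuous fun s => ν (clampedCube a h x s) := by
  have hlow : Continuous fun s i => clampLeft (a i) h (x i) s :=
    continuous_pi fun i => continuous_clampLeft _ _ _
  have hup : Continuous fun s i => clampLeft (a i) h (x i) s + s :=
    continuous_pi fun i => (continuous_clampLeft _ _ _).add continuous_id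
  exact continuous_iff_continuousAt.2 fun s =>
    tendsto_measure_Icc_of_absolutelyContinuous hν (hlow.tendsto s) (hup.tendsto s)

end Measure

section Ratio

variable {ι : Type u} [Fintype ι] {ν : Measure (ι → ℝ)} [IsFiniteMeasure ν] {a x : ι → ℝ}
  {h : ℝ} {E : Set (ι → ℝ)} {ρ : ℝ≥0∞}

lemma exists_clampedCube_measure_inter_eq (hν : ν ≪ volume) (hρ : ρ ≠ ∞) {s₀ s₁ : ℝ}
    (hs : s₀ ≤ s₁) (h₀ : ρ * ν (clampedCube a h x s₀) ≤ ν (clampedCube a h x s₀ ∩ E))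
    (h₁ : ν (clampedCube a h x s₁ ∩ E) ≤ ρ * ν (clampedCube a h x s₁)) :
    ∃ s ∈ Icc s₀ s₁, ν (clampedCube a h x s ∩ E) = ρ * ν (clampedCube a h x s) := by
  simp only [← Measure.restrict_apply measurableSet_Icc, clampedCube] at *
  obtain ⟨s, hs, heq⟩ := isPreconnected_Icc.intermediate_value₂ (left_mem_Icc.2 hs)
    (right_mem_Icc.2 hs)
    ((ENNReal.continuous_const_mul hρ).comp (continuous_measure_clampedCube hν a h x)).continuousOn
    (continuous_measure_clampedCube (Measure.restrict_le_self.absolutelyContinuous.trans hν)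
      a h x).continuousOn h₀ h₁
  exact ⟨s, hs, heq.symm⟩

lemma exists_clampedCube_measure_inter_eq_of_tendsto (hν : ν ≪ volume) (hρ : ρ < 1) (hh : 0 < h)
    (hQ : ν (Icc a (fun i => a i + h) ∩ E) ≤ ρ * ν (Icc a fun i => a i + h))
    (hx : x ∈ interior (Icc a fun i => a i + h))
    (hden : Tendsto (fun r => ν (E ∩ closedBall x r) / ν (closedBall x r)) (𝓝[>] 0) (𝓝 1)) :
    ∃ s, 0 < s ∧ s ≤ h ∧ ν (clampedCube a h x s ∩ E) = ρ * ν (clampedCube a h x s) := by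
  obtain ⟨r, hρr, ⟨hrQ, hrh⟩, hr⟩ : ∃ r, ρ < ν (E ∩ closedBall x r) / ν (closedBall x r) ∧
      (closedBall x r ⊆ Icc a (fun i => a i + h) ∧ r < h / 2) ∧ 0 < r :=
    ((hden.eventually (lt_mem_nhds hρ)).and <| (Eventually.filter_mono nhdsWithin_le_nhds <|
      (eventually_closedBall_subset (mem_interior_iff_mem_nhds.1 hx)).and
        (eventually_lt_nhds (half_pos hh))).and self_mem_nhdsWithin).exists
  have h₀ : ρ * ν (clampedCube a h x (2 * r)) ≤ ν (clampedCube a h x (2 * r) ∩ E) := by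
    rw [clampedCube_eq_closedBall hr.le hrQ, inter_comm]
    exact ENNReal.mul_le_of_le_div hρr.le
  obtain ⟨s, hs, heq⟩ := exists_clampedCube_measure_inter_eq hν hρ.ne_top (s₁ := h) (by linarith) h₀
    (by rwa [clampedCube_self])
  exact ⟨s, by linarith [hs.1], hs.2, heq⟩

end Ratio

lemma ae_mem_interior_and_tendsto_density {ι : Type u} [Fintype ι] {ν : Measure (ι → ℝ)}
    [IsLocallyFiniteMeasure ν] (hν : ν ≪ volume) {Q E : Set (ι → ℝ)} (hQ : Convex ℝ Q)
    (hE : MeasurableSet E) (hEQ : E ⊆ Q) :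
    ∀ᵐ x ∂ν, x ∈ E → x ∈ interior Q ∧
      Tendsto (fun r => ν (E ∩ closedBall x r) / ν (closedBall x r)) (𝓝[>] 0) (𝓝 1) := by
  have hfrontier : ∀ᵐ x ∂ν, x ∉ frontier Q :=
    measure_eq_zero_iff_ae_notMem.1 (hν (hQ.addHaar_frontier volume))
  filter_upwards [hfrontier, Besicovitch.ae_tendsto_measure_inter_div_of_measurableSet ν hE]
    with x hx hden hxE
  exact ⟨by_contra fun h => hx ⟨subset_closure (hEQ hxE), h⟩, by simpa [hxE] using hden⟩

section Overlap

variable {ι : Type u} [Fintype ι] {a : ι → ℝ} {h : ℝ}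

lemma exists_lt_abs_sub_of_disjoint_closedBall {p q : ι → ℝ} {r r' : ℝ} (hr : 0 ≤ r)
    (hr' : 0 ≤ r') (hd : Disjoint (closedBall p r) (closedBall q r')) :
    ∃ i, r + r' < |p i - q i| := by
  by_contra! hle
  have hdist : dist p q ≤ r + r' :=
    (dist_pi_le_iff (add_nonneg hr hr')).2 fun i => (Real.dist_eq _ _).trans_le (hle i)
  exact hdist.not_gt ((disjoint_closedBall_closedBall_iff hr hr').1 hd)

lemma injOn_offsetSign {β : Type*} {t : Set β} {c : β → ι → ℝ} {σ : β → ℝ}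
    (hc : ∀ j ∈ t, c j ∈ Icc a fun i => a i + h) (hσ : ∀ j ∈ t, 0 ≤ σ j ∧ σ j ≤ h)
    (hdisj : t.PairwiseDisjoint fun j => closedBall (c j) (σ j / 2)) (y : ι → ℝ) :
    InjOn (fun j i => offsetSign (y i - c j i) (σ j))
      {j ∈ t | y ∈ clampedCube a h (c j) (σ j)} := by
  rintro j ⟨hj, hyj⟩ k ⟨hk, hyk⟩ heq
  by_contra hne
  obtain ⟨i, hi⟩ := exists_lt_abs_sub_of_disjoint_closedBall (by linarith [(hσ j hj).1])
    (by linarith [(hσ k hk).1]) (hdisj hj hk hne)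
  exact hi.not_ge (abs_sub_le_of_offsetSign_eq ⟨(hc j hj).1 i, (hc j hj).2 i⟩
    ⟨(hc k hk).1 i, (hc k hk).2 i⟩ (hσ j hj).2 (hσ k hk).2 (mem_clampedCube.1 hyj i)
    (mem_clampedCube.1 hyk i) (congrFun heq i))

variable (ι) in
theorem exists_countable_clampedCube_cover_bounded_overlap : ∃ N : ℕ,
    ∀ (a : ι → ℝ) (h : ℝ) (A : Set (ι → ℝ)) (σ : (ι → ℝ) → ℝ), A ⊆ Icc a (fun i => a i + h) →
      (∀ x ∈ A, 0 < σ x ∧ σ x ≤ h) →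
      ∃ (κ : Type u) (_ : Countable κ) (c : κ → ι → ℝ), (∀ k, c k ∈ A) ∧
        A ⊆ ⋃ k, clampedCube a h (c k) (σ (c k)) ∧
        ∀ y, {k | y ∈ clampedCube a h (c k) (σ (c k))}.encard ≤ N := by
  obtain ⟨N, τ, hτ, hN⟩ := HasBesicovitchCovering.no_satelliteConfig (α := ι → ℝ)
  refine ⟨N * 3 ^ Fintype.card ι, fun a h A σ hAQ hσ => ?_⟩
  let p : Besicovitch.BallPackage A (ι → ℝ) :=
    { c := (↑), r := fun x => σ x / 2, rpos := fun x => half_pos (hσ x x.2).1, r_bound := h,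
      r_le := fun x => by linarith [hσ x x.2] }
  obtain ⟨fam, hdisj, hcover⟩ := Besicovitch.exist_disjoint_covering_families hτ hN p
  have : ∀ i, Countable (fam i) := fun i => Set.Countable.to_subtype <|
    (hdisj i).countable_of_nonempty_interior fun x _ =>
      ⟨x, mem_interior_iff_mem_nhds.2 (closedBall_mem_nhds _ (p.rpos x))⟩
  refine ⟨Σ i, fam i, inferInstance, fun k => k.2.1, fun k => k.2.1.2, fun x hx => ?_, fun y => ?_⟩
  · obtain ⟨i, hi⟩ := mem_iUnion.1 <| hcover ⟨⟨x, hx⟩, rfl⟩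
    obtain ⟨j, hj, hxj⟩ := mem_iUnion₂.1 hi
    exact mem_iUnion.2 ⟨⟨i, j, hj⟩,
      closedBall_inter_subset_clampedCube ⟨ball_subset_closedBall hxj, hAQ hx⟩⟩
  · have hinj : InjOn (fun k : Σ i, fam i => (k.1, fun i => offsetSign (y i - k.2.1.1 i) (σ k.2.1)))
        {k | y ∈ clampedCube a h k.2.1 (σ k.2.1)} := by
      rintro ⟨i, j⟩ hj ⟨i', j'⟩ hj' heq
      obtain ⟨rfl, hsign⟩ := Prod.mk.inj heq
      have hdisj' : (fam i).PairwiseDisjoint fun x : A => closedBall (x : ι → ℝ) (σ x / 2) :=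
        hdisj i
      have hfam := injOn_offsetSign (a := a) (h := h) (t := fam i) (c := fun x : A => (x : ι → ℝ))
        (σ := fun x => σ x) (fun x _ => hAQ x.2) (fun x _ => ⟨(hσ x x.2).1.le, (hσ x x.2).2⟩)
        hdisj' y
      rw [Subtype.ext (hfam ⟨j.2, hj⟩ ⟨j'.2, hj'⟩ hsign)]
    calc _ ≤ (univ : Set (Fin N × (ι → SignType))).encard :=
          encard_le_encard_of_injOn (mapsTo_univ _ _) hinj
      _ = N * 3 ^ Fintype.card ι := by simp [show Fintype.card SignType = 3 from rfl]

end Overlap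

theorem exists_clampedCube_cover (ι : Type u) [Fintype ι] : ∃ B : ℕ,
    ∀ (ν : Measure (ι → ℝ)) [IsFiniteMeasure ν], ν ≪ volume →
    ∀ {a : ι → ℝ} {h : ℝ} {E : Set (ι → ℝ)} {ρ : ℝ≥0∞}, 0 < h → MeasurableSet E →
      E ⊆ Icc a (fun i => a i + h) → ρ < 1 → ν E ≤ ρ * ν (Icc a fun i => a i + h) →
      ∃ (κ : Type u) (_ : Countable κ) (c : κ → ι → ℝ) (s : κ → ℝ),
        (∀ k, 0 < s k ∧ s k ≤ h) ∧
        (∀ k, ν (clampedCube a h (c k) (s k) ∩ E) = ρ * ν (clampedCube a h (c k) (s k))) ∧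
        (∀ y, {k | y ∈ clampedCube a h (c k) (s k)}.encard ≤ B) ∧
        ν (E \ ⋃ k, clampedCube a h (c k) (s k)) = 0 := by
  obtain ⟨B, hB⟩ := exists_countable_clampedCube_cover_bounded_overlap ι
  refine ⟨B, fun ν _ hν a h E ρ hh hE hEQ hρ hEρ => ?_⟩
  let A := {x | x ∈ interior (Icc a fun i => a i + h) ∧
    Tendsto (fun r => ν (E ∩ closedBall x r) / ν (closedBall x r)) (𝓝[>] 0) (𝓝 1)}
  have hside : ∀ x ∈ A, ∃ s, 0 < s ∧ s ≤ h ∧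
      ν (clampedCube a h x s ∩ E) = ρ * ν (clampedCube a h x s) := fun x hx =>
    exists_clampedCube_measure_inter_eq_of_tendsto hν hρ hh (by rwa [inter_eq_right.2 hEQ])
      hx.1 hx.2
  choose! σ hσ0 hσh hσ using hside
  obtain ⟨κ, hκ, c, hcA, hcover, hbound⟩ :=
    hB a h A σ (fun x hx => interior_subset hx.1) fun x hx => ⟨hσ0 x hx, hσh x hx⟩
  have hnull := ae_iff.1 (ae_mem_interior_and_tendsto_density hν (convex_Icc _ _) hE hEQ)
  refine ⟨κ, hκ, c, σ ∘ c, fun k => ⟨hσ0 _ (hcA k), hσh _ (hcA k)⟩, fun k => hσ _ (hcA k), hbound,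
    measure_mono_null ?_ hnull⟩
  exact fun x hx hxA => hx.2 (hcover (hxA hx.1))

/-- The Covering Lemma (Mateu–Mattila–Nicolau–Orobitg): for every dimension `n ≥ 1`
there is `B(n) > 0` such that for any measure `μ ≪ volume`, any cube `Q₀` with
`0 < μ(Q₀) < ∞`, any measurable `E ⊆ Q₀` and `0 < ρ < 1` with `μ(E) ≤ ρ μ(Q₀)`,
there is a countable family of cubes `Qᵢ ⊆ Q₀` with `μ(Qᵢ ∩ E) = ρ μ(Qᵢ)`, each
point of `Q₀` lying in at most `B(n)` of the cubes, and `μ`-almost every point of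
`E` lying in `⋃ᵢ Qᵢ`. -/
theorem stmt10 :
    ∀ n : ℕ, 1 ≤ n → ∃ B : ℕ, 0 < B ∧
      ∀ (μ : Measure (Fin n → ℝ)), μ ≪ volume →
      ∀ Q₀ : Set (Fin n → ℝ), IsCube Q₀ → 0 < μ Q₀ → μ Q₀ < ⊤ →
      ∀ E : Set (Fin n → ℝ), MeasurableSet E → E ⊆ Q₀ →
      ∀ ρ : ℝ, 0 < ρ → ρ < 1 → μ E ≤ ENNReal.ofReal ρ * μ Q₀ →
      ∃ (ι : Type) (_ : Countable ι) (Qi : ι → Set (Fin n → ℝ)),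
        (∀ i, IsCube (Qi i) ∧ Qi i ⊆ Q₀) ∧
        (∀ i, μ (Qi i ∩ E) = ENNReal.ofReal ρ * μ (Qi i)) ∧
        (∀ x ∈ Q₀, {i | x ∈ Qi i}.encard ≤ (B : ℕ∞)) ∧
        μ (E \ ⋃ i, Qi i) = 0 := by
  intro n _
  obtain ⟨B, hB⟩ := exists_clampedCube_cover (Fin n)
  refine ⟨B + 1, B.succ_pos, ?_⟩
  rintro μ hμ _ ⟨a, h, hh, rfl⟩ - hfin E hE hEQ ρ - hρ hEρ
  have : IsFiniteMeasure (μ.restrict (Icc a fun i => a i + h)) := isFiniteMeasure_restrict.2 hfin.ne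
  have hμQ {t} (ht : t ⊆ Icc a fun i => a i + h) : μ.restrict (Icc a fun i => a i + h) t = μ t :=
    Measure.restrict_eq_self μ ht
  obtain ⟨κ, hκ, c, s, hs, hratio, hbound, hcover⟩ :=
    hB _ (Measure.restrict_le_self.absolutelyContinuous.trans hμ) hh hE hEQ
      (ENNReal.ofReal_lt_one.2 hρ) (by rwa [hμQ hEQ, hμQ subset_rfl])
  have hsub k : clampedCube a h (c k) (s k) ⊆ Icc a fun i => a i + h := clampedCube_subset (hs k).2
  refine ⟨κ, hκ, fun k => clampedCube a h (c k) (s k),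
    fun k => ⟨isCube_clampedCube (hs k).1, hsub k⟩,
    fun k => ?_, fun y _ => (hbound y).trans (by exact_mod_cast B.le_succ), ?_⟩
  · rw [← hμQ (inter_subset_left.trans (hsub k)), ← hμQ (hsub k), hratio k]
  · rwa [← hμQ (sdiff_subset.trans hEQ)]
end
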